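/- Reich's theorem (sufficiency): let A be a real symmetric (n+1)×(n+1) matrix with all diagonal entries positive, and suppose A is positive definite (Re(x* A x) > 0 for all nonzero complex vectors x, where A is viewed as a complex matrix). Write A = A₁ + A₂ where A₁ is the lower triangular part of A (including the diagonal) and A₂ is the strictly upper triangular part. Then every eigenvalue μ of the Gauss–Seidel iteration matrix −A₁⁻¹A₂ satisfies |μ| < 1. -/

import Mathlib

/-!
Symmetry of `A` gives `A₁ᴴ = A₂ + D` with `D` the positive diagonal of `A`. For an eigenvector `v`
put `p = v* A₁ v` and `d = v* D v > 0`. The eigen-equation `A₂ v = -μ A₁ v` gives `v* A₂ v = -μ p`,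
so conjugating `p` yields `μ p = d - conj p`. Positivity of `Re (v* A v) = Re (p + conj p - d)`
says `d < 2 Re p`, which is exactly `|d - conj p| < |p|`; hence `|μ| < 1`.
-/

open Matrix RCLike ComplexConjugate
open scoped ComplexOrder

theorem RCLike.norm_ofReal_sub_conj_lt {𝕜 : Type*} [RCLike 𝕜] {p : 𝕜} {d : ℝ}
    (hd : 0 < d) (hdp : d < 2 * re p) : ‖(d : 𝕜) - conj p‖ < ‖p‖ := by
  refine lt_of_pow_lt_pow_left₀ 2 (norm_nonneg p) ?_
  simp only [norm_sq_eq_def, map_sub, ofReal_re, ofReal_im, conj_re, conj_im]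
  nlinarith

namespace Matrix

theorem isUnit_det_of_isLowerTriangular {ι K : Type*} [Fintype ι] [LinearOrder ι] [Field K]
    {M : Matrix ι ι K} (hM : M.IsLowerTriangular) (hdiag : ∀ i, M i i ≠ 0) : IsUnit M.det := by
  simpa [det_of_isLowerTriangular M hM, Finset.prod_ne_zero_iff] using hdiag

theorem star_dotProduct_mulVec_eq_sum_sum {ι R : Type*} [Fintype ι] [NonUnitalSemiring R] [Star R]
    (M : Matrix ι ι R) (v : ι → R) :
    star v ⬝ᵥ M *ᵥ v = ∑ i, ∑ j, star (v i) * M i j * v j := by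
  simp [dotProduct, mulVec, Finset.mul_sum, mul_assoc]

variable {ι 𝕜 : Type*} [Fintype ι] [RCLike 𝕜]

theorem star_star_dotProduct_mulVec (M : Matrix ι ι 𝕜) (v : ι → 𝕜) :
    star (star v ⬝ᵥ M *ᵥ v) = star v ⬝ᵥ Mᴴ *ᵥ v := by
  rw [star_dotProduct, star_mulVec, star_star, dotProduct_mulVec]

theorem mulVec_eq_neg_smul_mulVec_of_mulVec_eq_smul [DecidableEq ι] {L U : Matrix ι ι 𝕜}
    (hL : IsUnit L.det) {v : ι → 𝕜} {μ : 𝕜} (heig : (-(L⁻¹ * U)) *ᵥ v = μ • v) :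
    U *ᵥ v = -μ • L *ᵥ v := by
  have hinv : L⁻¹ *ᵥ (U *ᵥ v) = -μ • v := by
    rw [neg_smul, ← heig, neg_mulVec, mulVec_mulVec, neg_neg]
  calc U *ᵥ v = L *ᵥ (L⁻¹ *ᵥ (U *ᵥ v)) := by rw [mulVec_mulVec, mul_nonsing_inv _ hL, one_mulVec]
    _ = -μ • L *ᵥ v := by rw [hinv, mulVec_smul]

theorem norm_lt_one_of_conjTranspose_eq_add {L U D : Matrix ι ι 𝕜} {v : ι → 𝕜} {μ : 𝕜}
    (hsplit : Lᴴ = U + D) (hD : D.PosDef) (hv : v ≠ 0)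
    (hpos : 0 < re (star v ⬝ᵥ (L + U) *ᵥ v)) (heig : U *ᵥ v = -μ • L *ᵥ v) : ‖μ‖ < 1 := by
  set p := star v ⬝ᵥ L *ᵥ v
  obtain ⟨hd, hd_im⟩ := RCLike.pos_iff.mp (hD.dotProduct_mulVec_pos hv)
  have hq : star v ⬝ᵥ U *ᵥ v = -μ * p := by rw [heig, dotProduct_smul, smul_eq_mul]
  have hconj : conj p = -μ * p + star v ⬝ᵥ D *ᵥ v := by
    rw [← hq, ← dotProduct_add, ← add_mulVec, ← hsplit, ← star_star_dotProduct_mulVec]; rfl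
  set d := star v ⬝ᵥ D *ᵥ v
  have hd_real : (re d : 𝕜) = d := by rw [← conj_eq_iff_re, conj_eq_iff_im, ← hd_im]
  have hre : re d < 2 * re p := by
    rw [add_mulVec, dotProduct_add, hq, map_add, show -μ * p = conj p - d by rw [hconj]; ring,
      map_sub, conj_re] at hpos
    linarith
  have hμp : ‖μ‖ * ‖p‖ < ‖p‖ := by
    rw [← norm_mul, show μ * p = (re d : 𝕜) - conj p by rw [hd_real, hconj]; ring]
    exact norm_ofReal_sub_conj_lt hd hre
  exact (mul_lt_iff_lt_one_left ((mul_nonneg (norm_nonneg μ) (norm_nonneg p)).trans_lt hμp)).mp hμp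

end Matrix

theorem Reich_sufficiency (n : ℕ) (A : Matrix (Fin (n + 1)) (Fin (n + 1)) ℝ)
    (hdiag : ∀ i, 0 < A i i)
    (hsym : ∀ i j, A i j = A j i)
    (hpd : ∀ x : Fin (n + 1) → ℂ, x ≠ 0 →
      0 < (∑ i, ∑ j, (starRingEnd ℂ) (x i) * (A i j : ℂ) * x j).re)
    (A₁ A₂ : Matrix (Fin (n + 1)) (Fin (n + 1)) ℝ)
    (hA₁ : ∀ i j, A₁ i j = if j ≤ i then A i j else 0)
    (hA₂ : ∀ i j, A₂ i j = if i < j then A i j else 0)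
    (μ : ℂ) (v : Fin (n + 1) → ℂ) (hv : v ≠ 0)
    (heig : (-((A₁.map (Complex.ofReal))⁻¹ * (A₂.map (Complex.ofReal)))).mulVec v = μ • v) :
    ‖μ‖ < 1 := by
  set L := A₁.map Complex.ofReal
  set U := A₂.map Complex.ofReal
  have hL : L.IsLowerTriangular := fun i j (hij : i < j) => by simp [L, hA₁, not_le.mpr hij]
  have hsplit : Lᴴ = U + diagonal fun i => (A i i : ℂ) := by
    ext i j
    rcases lt_trichotomy i j with h | rfl | h
    · simp [L, U, hA₁, hA₂, h, h.le, h.ne, hsym j i]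
    · simp [L, U, hA₁, hA₂]
    · simp [L, U, hA₁, hA₂, not_le.mpr h, not_lt.mpr h.le, h.ne']
  have hsum : L + U = A.map Complex.ofReal := by
    ext i j
    by_cases h : j ≤ i <;> simp [L, U, hA₁, hA₂, h, not_lt.mpr, lt_of_not_ge]
  have hLdet : IsUnit L.det :=
    isUnit_det_of_isLowerTriangular hL fun i => by simpa [L, hA₁] using (hdiag i).ne'
  refine norm_lt_one_of_conjTranspose_eq_add hsplit
    (PosDef.diagonal fun i => Complex.zero_lt_real.mpr (hdiag i)) hv ?_
    (mulVec_eq_neg_smul_mulVec_of_mulVec_eq_smul hLdet heig)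
  simpa [hsum, star_dotProduct_mulVec_eq_sum_sum] using hpd v hv
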